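/- arXiv:1912.10111 — 2 statements merged into one kernel-verified Lean document; each statement's English description precedes it below -/
import Mathlib

section
/- Let μ be a Borel probability measure on [0,1] with μ₂ > 0 and let (f,g),(F,G) ∈ C_2(I). If for all x ∈ I, m_{x;f,g;μ}''(0)=m_{x;F,G;μ}''(0), then Φ_{f,g}=Φ_{F,G} holds on I. -/
open MeasureTheory Set

/-- The generalized quasiarithmetic mean `M_{f,g;μ}` on the interval `I`. -/
noncomputable def Mmean (I : Set ℝ) (f g : ℝ → ℝ) (μ : Measure ℝ) (x y : ℝ) : ℝ :=
  Function.invFunOn (fun t => f t / g t) I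
    ((∫ t in Set.Icc (0:ℝ) 1, f (t * x + (1 - t) * y) ∂μ) /
      (∫ t in Set.Icc (0:ℝ) 1, g (t * x + (1 - t) * y) ∂μ))

/-- First moment `μ̂₁` of a measure on `[0,1]`. -/
noncomputable def mom1 (μ : Measure ℝ) : ℝ := ∫ t in Set.Icc (0:ℝ) 1, t ∂μ

/-- `n`-th centralized moment `μ_n` of a measure on `[0,1]`. -/
noncomputable def cmom (μ : Measure ℝ) (n : ℕ) : ℝ :=
  ∫ t in Set.Icc (0:ℝ) 1, (t - mom1 μ) ^ n ∂μ

/-- The auxiliary function `m_{x;f,g;μ}`. -/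
noncomputable def mfun (I : Set ℝ) (f g : ℝ → ℝ) (μ : Measure ℝ) (x : ℝ) : ℝ → ℝ :=
  fun u => Mmean I f g μ (x + (1 - mom1 μ) * u) (x - mom1 μ * u)

/-- The `(i,j)`-order Wronskian `W^{i,j}_{f,g} = f⁽ⁱ⁾g⁽ʲ⁾ − f⁽ʲ⁾g⁽ⁱ⁾`. -/
noncomputable def Wr (i j : ℕ) (f g : ℝ → ℝ) : ℝ → ℝ :=
  fun x => iteratedDeriv i f x * iteratedDeriv j g x - iteratedDeriv j f x * iteratedDeriv i g x

/-- `Φ_{f,g} = W^{2,0}/W^{1,0}`. -/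
noncomputable def Phi (f g : ℝ → ℝ) : ℝ → ℝ := fun x => Wr 2 0 f g x / Wr 1 0 f g x

/-- `Ψ_{f,g} = −W^{2,1}/W^{1,0}`. -/
noncomputable def Psi (f g : ℝ → ℝ) : ℝ → ℝ := fun x => -(Wr 2 1 f g x / Wr 1 0 f g x)

/-- The class `𝒞_n(I)` for `n ≥ 1`. -/
def ClassC (n : ℕ) (I : Set ℝ) (f g : ℝ → ℝ) : Prop :=
  ContDiffOn ℝ n f I ∧ ContDiffOn ℝ n g I ∧ (∀ x ∈ I, 0 < g x) ∧
    ∀ x ∈ I, Wr 1 0 f g x ≠ 0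

/-- The class `𝒞₀(I)`. -/
def ClassC0 (I : Set ℝ) (f g : ℝ → ℝ) : Prop :=
  ContinuousOn f I ∧ ContinuousOn g I ∧ (∀ x ∈ I, 0 < g x) ∧
    (StrictMonoOn (fun x => f x / g x) I ∨ StrictAntiOn (fun x => f x / g x) I)

/-- Equivalence of pairs: `(f,g) ∼ (F,G)`. -/
def EquivPair (I : Set ℝ) (f g F G : ℝ → ℝ) : Prop :=
  ∃ a b c d : ℝ, a * d ≠ b * c ∧
    ∀ x ∈ I, F x = a * f x + b * g x ∧ G x = c * f x + d * g x

/-- Equality of two two-variable means near the diagonal of `I²`. -/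
def EqualNearDiag (I : Set ℝ) (M N : ℝ → ℝ → ℝ) : Prop :=
  ∃ U : Set (ℝ × ℝ), IsOpen U ∧ U ⊆ I ×ˢ I ∧
    I ⊆ closure {y | y ∈ I ∧ (y, y) ∈ U} ∧
    ∀ p ∈ U, M p.1 p.2 = N p.1 p.2

/-- The quasiarithmetic mean `A_φ`. -/
noncomputable def QAmean (I : Set ℝ) (φ : ℝ → ℝ) (x y : ℝ) : ℝ :=
  Function.invFunOn φ I ((φ x + φ y) / 2)

/-- The sine-type function `S_t`. -/
noncomputable def Sfun (t x : ℝ) : ℝ :=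
  if t < 0 then Real.sin (Real.sqrt (-t) * x)
  else if t = 0 then x
  else Real.sinh (Real.sqrt t * x)

/-- The cosine-type function `C_t`. -/
noncomputable def Cfun (t x : ℝ) : ℝ :=
  if t < 0 then Real.cos (Real.sqrt (-t) * x)
  else if t = 0 then 1
  else Real.cosh (Real.sqrt t * x)

/-- The real (sign-preserving) cube root. -/
noncomputable def cbrt (x : ℝ) : ℝ :=
  if x < 0 then -((-x) ^ ((1:ℝ)/3)) else x ^ ((1:ℝ)/3)

/-!
Write `N_h(u) = ∫ h(x + (t - μ̂₁) u) dμ(t)`, so that `m_x = (f/g)⁻¹ ∘ (N_f / N_g)` near `0`.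
Differentiating under the integral sign, `N_h(0) = h(x)`, `N_h'(0) = h'(x) ∫ (t - μ̂₁) dμ = 0`
and `N_h''(0) = μ₂ h''(x)`; hence `r = N_f / N_g` satisfies `r'(0) = 0` and
`r''(0) = μ₂ W^{2,0}_{f,g}(x) / g(x)²`. The map `f/g` has derivative `W^{1,0}_{f,g} / g²`, which
does not vanish, so it is injective on the interval `I` and has a `C²` local inverse at `x`.
Because `r'(0) = 0`, the chain rule leaves `m_x''(0) = r''(0) / (f/g)'(x) = μ₂ Φ_{f,g}(x)`,
and the hypothesis becomes `μ₂ Φ_{f,g} = μ₂ Φ_{F,G}` with `μ₂ > 0`.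
-/

open Filter Metric Function
open scoped Topology

lemma iteratedDeriv_two_eq_deriv_deriv (f : ℝ → ℝ) : iteratedDeriv 2 f = deriv (deriv f) := by
  rw [iteratedDeriv_succ, iteratedDeriv_one]

lemma Wr_one_zero (f g : ℝ → ℝ) (x : ℝ) : Wr 1 0 f g x = deriv f x * g x - f x * deriv g x := by
  simp [Wr]

lemma Wr_two_zero (f g : ℝ → ℝ) (x : ℝ) :
    Wr 2 0 f g x = deriv (deriv f) x * g x - f x * deriv (deriv g) x := by
  simp [Wr, iteratedDeriv_two_eq_deriv_deriv]

lemma injOn_of_hasDerivAt_ne_zero {s : Set ℝ} (hs : Convex ℝ s) {f f' : ℝ → ℝ}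
    (hf : ∀ x ∈ s, HasDerivAt f (f' x) x) (hf' : ∀ x ∈ s, f' x ≠ 0) : InjOn f s := by
  have hcont : ContinuousOn f s := fun x hx => (hf x hx).continuousAt.continuousWithinAt
  have hderiv : ∀ x ∈ interior s, deriv f x = f' x := fun x hx => (hf x (interior_subset hx)).deriv
  rcases hasDerivWithinAt_forall_lt_or_forall_gt_of_forall_ne hs
    (fun x hx => (hf x hx).hasDerivWithinAt) hf' with hneg | hpos
  · refine (strictAntiOn_of_deriv_neg hs hcont fun x hx => ?_).injOn
    rw [hderiv x hx]
    exact hneg x (interior_subset hx)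
  · refine (strictMonoOn_of_deriv_pos hs hcont fun x hx => ?_).injOn
    rw [hderiv x hx]
    exact hpos x (interior_subset hx)

lemma hasDerivAt_deriv_div_of_deriv_eq_zero {N D N' D' : ℝ → ℝ} {n d s : ℝ}
    (hN : HasDerivAt N (N' s) s) (hD : HasDerivAt D (D' s) s)
    (hN' : HasDerivAt N' n s) (hD' : HasDerivAt D' d s)
    (hN's : N' s = 0) (hD's : D' s = 0) (hDs : D s ≠ 0) :
    HasDerivAt (fun u => (N' u * D u - N u * D' u) / D u ^ 2)
      ((n * D s - N s * d) / D s ^ 2) s := by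
  refine (((hN'.mul hD).sub (hN.mul hD')).div (hD.pow 2) (pow_ne_zero 2 hDs)).congr_deriv ?_
  simp only [Pi.pow_apply, hN's, hD's]
  field_simp
  ring

lemma iteratedDeriv_two_invFunOn_comp {I : Set ℝ} (hI : IsOpen I) {φ : ℝ → ℝ}
    (hinj : InjOn φ I) {x d : ℝ} (hx : x ∈ I) (hφ : ContDiffAt ℝ 2 φ x)
    (hφx : HasDerivAt φ d x) (hd : d ≠ 0) {r r' : ℝ → ℝ} {s a : ℝ}
    (hr : ∀ᶠ u in 𝓝 s, HasDerivAt r (r' u) u) (hrs : r s = φ x) (hr's : r' s = 0)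
    (hr' : HasDerivAt r' a s) :
    iteratedDeriv 2 (fun u => invFunOn φ I (r u)) s = a / d := by
  have hstrict : HasStrictDerivAt φ d x := hφ.hasStrictDerivAt' hφx two_ne_zero
  set L := hstrict.localInverse φ d x hd
  have hL : HasDerivAt L d⁻¹ (φ x) := (hstrict.to_localInverse hd).hasDerivAt
  have hL2 : ContDiffAt ℝ 2 L (φ x) := hφ.to_localInverse (hφx.hasFDerivAt_equiv hd) two_ne_zero
  have hLI : ∀ᶠ w in 𝓝 (φ x), L w ∈ I := by
    refine hL.continuousAt.eventually_mem ?_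
    rw [show L (φ x) = x from hφ.localInverse_apply_image (hφx.hasFDerivAt_equiv hd) two_ne_zero]
    exact hI.mem_nhds hx
  have hinv : ∀ᶠ w in 𝓝 (φ x), invFunOn φ I w = L w := by
    filter_upwards [hLI, hstrict.eventually_right_inverse hd] with w hwI hw
    conv_lhs => rw [← hw]
    exact hinj.leftInvOn_invFunOn hwI
  have hLdiff : ∀ᶠ w in 𝓝 (φ x), HasDerivAt L (deriv L w) w := by
    filter_upwards [hL2.eventually (by simp)] with w hw
    exact (hw.differentiableAt two_ne_zero).hasDerivAt
  have hrt : Tendsto r (𝓝 s) (𝓝 (φ x)) := hrs ▸ hr.self_of_nhds.continuousAt.tendsto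
  have hcomp : (fun u => invFunOn φ I (r u)) =ᶠ[𝓝 s] fun u => L (r u) := hrt.eventually hinv
  have hderiv : deriv (fun u => L (r u)) =ᶠ[𝓝 s] fun u => deriv L (r u) * r' u := by
    filter_upwards [hr, hrt.eventually hLdiff] with u hu hLu
    exact (hLu.comp u hu).deriv
  have hL' : HasDerivAt (deriv L) (deriv (deriv L) (r s)) (r s) := by
    rw [hrs]
    exact ((hL2.derivWithin (m := 1) le_rfl).differentiableAt one_ne_zero).hasDerivAt
  have hsecond : HasDerivAt (fun u => deriv L (r u) * r' u)
      (deriv (deriv L) (r s) * r' s * r' s + deriv L (r s) * a) s :=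
    (hL'.comp s hr.self_of_nhds).mul hr'
  rw [iteratedDeriv_two_eq_deriv_deriv, hcomp.deriv.deriv_eq, hderiv.deriv_eq, hsecond.deriv]
  simp [hr's, hrs, hL.deriv, div_eq_inv_mul]

/-- `N_h` above is `momentAverage μ μ̂₁ x 0 h`; the weight `(t - c) ^ k` records the factors that
differentiation in `u` produces. -/
noncomputable def momentAverage (μ : Measure ℝ) (c x : ℝ) (k : ℕ) (h : ℝ → ℝ) (u : ℝ) : ℝ :=
  ∫ t in Icc (0:ℝ) 1, (t - c) ^ k * h (x + (t - c) * u) ∂μ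

section MomentAverage

variable {c x δ t u : ℝ}

lemma abs_sub_le_one_add_abs (ht : t ∈ Icc (0:ℝ) 1) : |t - c| ≤ 1 + |c| :=
  (abs_sub t c).trans (by rw [abs_of_nonneg ht.1]; linarith [ht.2])

lemma add_sub_mul_mem_closedBall (ht : t ∈ Icc (0:ℝ) 1) (hu : u ∈ ball (0:ℝ) (δ / (1 + |c|))) :
    x + (t - c) * u ∈ closedBall x δ := by
  rw [mem_ball_zero_iff, Real.norm_eq_abs, lt_div_iff₀ (by positivity)] at hu
  rw [mem_closedBall, dist_eq_norm, add_sub_cancel_left, Real.norm_eq_abs, abs_mul]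
  nlinarith [abs_sub_le_one_add_abs (c := c) ht, abs_nonneg u]

lemma continuousOn_momentIntegrand {I : Set ℝ} {p : ℝ → ℝ} (hp : ContinuousOn p I)
    (hδ : closedBall x δ ⊆ I) (k : ℕ) (hu : u ∈ ball (0:ℝ) (δ / (1 + |c|))) :
    ContinuousOn (fun t => (t - c) ^ k * p (x + (t - c) * u)) (Icc 0 1) :=
  (continuousOn_id.sub continuousOn_const).pow k |>.mul <|
    hp.comp (by fun_prop) fun _ ht => hδ (add_sub_mul_mem_closedBall ht hu)

lemma hasDerivAt_momentAverage (μ : Measure ℝ) [IsFiniteMeasure μ] {I : Set ℝ} {h h' : ℝ → ℝ}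
    (hh : ∀ y ∈ I, HasDerivAt h (h' y) y) (hh' : ContinuousOn h' I)
    (hδ : closedBall x δ ⊆ I) (k : ℕ) (hu : u ∈ ball (0:ℝ) (δ / (1 + |c|))) :
    HasDerivAt (momentAverage μ c x k h) (momentAverage μ c x (k + 1) h' u) u := by
  have hhc : ContinuousOn h I := fun y hy => (hh y hy).continuousAt.continuousWithinAt
  obtain ⟨B, hB⟩ := (isCompact_closedBall x δ).exists_bound_of_continuousOn (hh'.mono hδ)
  refine (hasDerivAt_integral_of_dominated_loc_of_deriv_le (μ := μ.restrict (Icc 0 1))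
    (F := fun v t => (t - c) ^ k * h (x + (t - c) * v))
    (F' := fun v t => (t - c) ^ (k + 1) * h' (x + (t - c) * v))
    (bound := fun _ => (1 + |c|) ^ (k + 1) * B)
    (isOpen_ball.mem_nhds hu) ?_ ?_ ?_ ?_ (integrable_const _) ?_).2
  · filter_upwards [isOpen_ball.mem_nhds hu] with v hv
    exact (continuousOn_momentIntegrand hhc hδ k hv).aestronglyMeasurable measurableSet_Icc
  · exact (continuousOn_momentIntegrand hhc hδ k hu).integrableOn_compact isCompact_Icc
  · exact (continuousOn_momentIntegrand hh' hδ (k + 1) hu).aestronglyMeasurable measurableSet_Icc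
  · filter_upwards [ae_restrict_mem measurableSet_Icc] with t ht v hv
    rw [norm_mul, norm_pow]
    exact mul_le_mul (pow_le_pow_left₀ (abs_nonneg _) (abs_sub_le_one_add_abs ht) _)
      (hB _ (add_sub_mul_mem_closedBall ht hv)) (norm_nonneg _) (by positivity)
  · filter_upwards [ae_restrict_mem measurableSet_Icc] with t ht v hv
    have hin := hh _ (hδ (add_sub_mul_mem_closedBall ht hv))
    exact ((hin.comp v (((hasDerivAt_id' v).const_mul (t - c)).const_add x)).const_mul
      ((t - c) ^ k)).congr_deriv (by ring)

end MomentAverage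

lemma momentAverage_zero_right (μ : Measure ℝ) (c x : ℝ) (k : ℕ) (h : ℝ → ℝ) :
    momentAverage μ c x k h 0 = (∫ t in Icc (0:ℝ) 1, (t - c) ^ k ∂μ) * h x := by
  simp [momentAverage, integral_mul_const]

lemma eventually_hasDerivAt_momentAverage (μ : Measure ℝ) [IsFiniteMeasure μ] {I : Set ℝ}
    (hI : IsOpen I) {h : ℝ → ℝ} (hh : ContDiffOn ℝ 1 h I) {x : ℝ} (hx : x ∈ I) (c : ℝ) (k : ℕ) :
    ∀ᶠ u in 𝓝 0,
      HasDerivAt (momentAverage μ c x k h) (momentAverage μ c x (k + 1) (deriv h) u) u := by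
  obtain ⟨δ, hδ, hδI⟩ := nhds_basis_closedBall.mem_iff.1 (hI.mem_nhds hx)
  filter_upwards [ball_mem_nhds (0:ℝ) (by positivity : 0 < δ / (1 + |c|))] with u hu
  refine hasDerivAt_momentAverage μ (fun y hy => ?_) (hh.continuousOn_deriv_of_isOpen hI le_rfl)
    hδI k hu
  exact ((hh.contDiffAt (hI.mem_nhds hy)).differentiableAt one_ne_zero).hasDerivAt

lemma mfun_eq_invFunOn_momentAverage (I : Set ℝ) (f g : ℝ → ℝ) (μ : Measure ℝ) (x : ℝ) :
    mfun I f g μ x = fun u => invFunOn (fun y => f y / g y) I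
      (momentAverage μ (mom1 μ) x 0 f u / momentAverage μ (mom1 μ) x 0 g u) := by
  funext u
  simp only [mfun, Mmean, momentAverage, pow_zero, one_mul]
  congr 3 <;> funext t <;> ring_nf

section ProbabilityOnUnitInterval

variable {μ : Measure ℝ} [IsProbabilityMeasure μ]

lemma measureReal_Icc_eq_one (hsupp : μ (Icc (0:ℝ) 1)ᶜ = 0) : μ.real (Icc (0:ℝ) 1) = 1 := by
  rw [measureReal_def, (prob_compl_eq_zero_iff measurableSet_Icc).1 hsupp, ENNReal.toReal_one]

lemma setIntegral_Icc_sub_mom1 (hsupp : μ (Icc (0:ℝ) 1)ᶜ = 0) :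
    ∫ t in Icc (0:ℝ) 1, (t - mom1 μ) ∂μ = 0 := by
  have hint : IntegrableOn (fun t : ℝ => t) (Icc 0 1) μ :=
    continuousOn_id.integrableOn_compact isCompact_Icc
  rw [integral_sub hint (integrable_const _),
    setIntegral_const, measureReal_Icc_eq_one hsupp, one_smul, mom1, sub_self]

lemma momentAverage_zero_zero (hsupp : μ (Icc (0:ℝ) 1)ᶜ = 0) (c x : ℝ) (h : ℝ → ℝ) :
    momentAverage μ c x 0 h 0 = h x := by
  simp [momentAverage_zero_right, measureReal_Icc_eq_one hsupp]

lemma momentAverage_mom1_one_zero (hsupp : μ (Icc (0:ℝ) 1)ᶜ = 0) (x : ℝ) (h : ℝ → ℝ) :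
    momentAverage μ (mom1 μ) x 1 h 0 = 0 := by
  simp [momentAverage_zero_right, setIntegral_Icc_sub_mom1 hsupp]

end ProbabilityOnUnitInterval

lemma hasDerivAt_div_of_Wr {I : Set ℝ} (hI : IsOpen I) {f g : ℝ → ℝ} (hf : ContDiffOn ℝ 1 f I)
    (hg : ContDiffOn ℝ 1 g I) {y : ℝ} (hy : y ∈ I) (hgy : g y ≠ 0) :
    HasDerivAt (fun y => f y / g y) (Wr 1 0 f g y / g y ^ 2) y := by
  rw [Wr_one_zero]
  exact ((hf.contDiffAt (hI.mem_nhds hy)).differentiableAt one_ne_zero).hasDerivAt.div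
    ((hg.contDiffAt (hI.mem_nhds hy)).differentiableAt one_ne_zero).hasDerivAt hgy

lemma exists_hasDerivAt_momentAverage_div {μ : Measure ℝ} [IsProbabilityMeasure μ]
    (hsupp : μ (Icc (0:ℝ) 1)ᶜ = 0) {I : Set ℝ} (hI : IsOpen I) {f g : ℝ → ℝ}
    (hf : ContDiffOn ℝ 2 f I) (hg : ContDiffOn ℝ 2 g I) {x : ℝ} (hx : x ∈ I) (hgx : g x ≠ 0) :
    ∃ r' : ℝ → ℝ, (∀ᶠ u in 𝓝 0, HasDerivAt
        (fun u => momentAverage μ (mom1 μ) x 0 f u / momentAverage μ (mom1 μ) x 0 g u) (r' u) u) ∧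
      r' 0 = 0 ∧ HasDerivAt r' (cmom μ 2 * Wr 2 0 f g x / g x ^ 2) 0 := by
  have hF0 := eventually_hasDerivAt_momentAverage μ hI (hf.of_le one_le_two) hx (mom1 μ) 0
  have hG0 := eventually_hasDerivAt_momentAverage μ hI (hg.of_le one_le_two) hx (mom1 μ) 0
  have hF1 := eventually_hasDerivAt_momentAverage μ hI
    (hf.deriv_of_isOpen hI (by norm_num)) hx (mom1 μ) 1
  have hG1 := eventually_hasDerivAt_momentAverage μ hI
    (hg.deriv_of_isOpen hI (by norm_num)) hx (mom1 μ) 1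
  have hG0x : momentAverage μ (mom1 μ) x 0 g 0 ≠ 0 := by
    rwa [momentAverage_zero_zero hsupp]
  refine ⟨_, ?_, ?_, (hasDerivAt_deriv_div_of_deriv_eq_zero hF0.self_of_nhds hG0.self_of_nhds
    hF1.self_of_nhds hG1.self_of_nhds (momentAverage_mom1_one_zero hsupp _ _)
    (momentAverage_mom1_one_zero hsupp _ _) hG0x).congr_deriv ?_⟩
  · filter_upwards [hF0, hG0, hG0.self_of_nhds.continuousAt.eventually_ne hG0x] with u hFu hGu hne
    exact hFu.div hGu hne
  · simp [momentAverage_mom1_one_zero hsupp]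
  · simp only [momentAverage_zero_zero hsupp, momentAverage_zero_right _ _ _ 2, cmom,
      Wr_two_zero]
    ring

lemma iteratedDeriv_two_mfun {I : Set ℝ} (hI : IsOpen I) (hIconn : I.OrdConnected)
    {μ : Measure ℝ} [IsProbabilityMeasure μ] (hsupp : μ (Icc (0:ℝ) 1)ᶜ = 0)
    {f g : ℝ → ℝ} (hfg : ClassC 2 I f g) {x : ℝ} (hx : x ∈ I) :
    iteratedDeriv 2 (mfun I f g μ x) 0 = cmom μ 2 * Phi f g x := by
  obtain ⟨hf, hg, hgpos, hW⟩ := hfg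
  have hgx : g x ≠ 0 := (hgpos x hx).ne'
  have hφ' : ∀ y ∈ I, HasDerivAt (fun y => f y / g y) (Wr 1 0 f g y / g y ^ 2) y :=
    fun y hy => hasDerivAt_div_of_Wr hI (hf.of_le one_le_two) (hg.of_le one_le_two) hy
      (hgpos y hy).ne'
  have hinj : InjOn (fun y => f y / g y) I := injOn_of_hasDerivAt_ne_zero hIconn.convex hφ'
    fun y hy => div_ne_zero (hW y hy) (pow_pos (hgpos y hy) 2).ne'
  have hφ : ContDiffAt ℝ 2 (fun y => f y / g y) x :=
    (hf.contDiffAt (hI.mem_nhds hx)).div (hg.contDiffAt (hI.mem_nhds hx)) hgx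
  obtain ⟨r', hr, hr'0, hr'⟩ := exists_hasDerivAt_momentAverage_div hsupp hI hf hg hx hgx
  rw [mfun_eq_invFunOn_momentAverage, iteratedDeriv_two_invFunOn_comp hI hinj hx hφ (hφ' x hx)
    (div_ne_zero (hW x hx) (pow_ne_zero 2 hgx)) hr
    (by simp only [momentAverage_zero_zero hsupp]) hr'0 hr', Phi]
  field_simp

theorem statement8_general (I : Set ℝ) (hIopen : IsOpen I)
    (hIconn : I.OrdConnected)
    (μ : Measure ℝ) [IsProbabilityMeasure μ] (hsupp : μ (Set.Icc (0:ℝ) 1)ᶜ = 0)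
    (hμ2 : 0 < cmom μ 2)
    (f g F G : ℝ → ℝ) (hfg : ClassC 2 I f g) (hFG : ClassC 2 I F G)
    (hder : ∀ x ∈ I,
      iteratedDeriv 2 (mfun I f g μ x) 0 = iteratedDeriv 2 (mfun I F G μ x) 0) :
    ∀ x ∈ I, Phi f g x = Phi F G x := by
  intro x hx
  have h := hder x hx
  rw [iteratedDeriv_two_mfun hIopen hIconn hsupp hfg hx,
    iteratedDeriv_two_mfun hIopen hIconn hsupp hFG hx] at h
  exact mul_left_cancel₀ hμ2.ne' h

/-- Necessary condition from second derivatives when `μ₂ > 0`. -/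
theorem statement8 (I : Set ℝ) (hIopen : IsOpen I) (hIne : I.Nonempty)
    (hIconn : I.OrdConnected)
    (μ : Measure ℝ) [IsProbabilityMeasure μ] (hsupp : μ (Set.Icc (0:ℝ) 1)ᶜ = 0)
    (hμ2 : 0 < cmom μ 2)
    (f g F G : ℝ → ℝ) (hfg : ClassC 2 I f g) (hFG : ClassC 2 I F G)
    (hder : ∀ x ∈ I,
      iteratedDeriv 2 (mfun I f g μ x) 0 = iteratedDeriv 2 (mfun I F G μ x) 0) :
    ∀ x ∈ I, Phi f g x = Phi F G x :=
  statement8_general I hIopen hIconn μ hsupp hμ2 f g F G hfg hFG hder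
end

section
/- Let n ≥ 2 be an integer and (f,g) ∈ C_n(I). Define sequences of functions (φ_i) and (ψ_i) on I by the recursions φ₀ := 0, ψ₀ := 1, and for i ∈ {0,…,n−1}: φ_{i+1} := φ_i' + φ_i·Φ_{f,g} + ψ_i and ψ_{i+1} := φ_i·Ψ_{f,g} + ψ_i'. Then for each h ∈ {f,g} and each i ∈ {0,…,n}, the identity h^{(i)} = φ_i·h' + ψ_i·h holds on I. -/
open MeasureTheory Set

/-!
Both `f` and `g` solve the linear equation `h'' = Φ h' + Ψ h` (Cramer's rule for the system
`h'' = a h' + b h`, `h ∈ {f, g}`, whose determinant is `W^{1,0}_{f,g} ≠ 0`). Differentiating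
`h⁽ⁱ⁾ = φᵢ h' + ψᵢ h` and eliminating `h''` with this equation gives exactly the recursion for
`φᵢ₊₁`, `ψᵢ₊₁`. The only care needed is regularity: `φᵢ, ψᵢ` are `C^{n-i}` on `I`, since
`Φ, Ψ` are `C^{n-2}` and `φ₁ = 1`, `ψ₁ = 0`.
-/

theorem ContDiffOn.iteratedDeriv_of_isOpen {𝕜 F : Type*} [NontriviallyNormedField 𝕜]
    [NormedAddCommGroup F] [NormedSpace 𝕜 F] {f : 𝕜 → F} {s : Set 𝕜} {n m i : ℕ}
    (hf : ContDiffOn 𝕜 n f s) (hs : IsOpen s) (hmi : m + i ≤ n) :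
    ContDiffOn 𝕜 m (iteratedDeriv i f) s := by
  induction i generalizing m with
  | zero => simpa using hf.of_le (by exact_mod_cast hmi)
  | succ i ih =>
    rw [iteratedDeriv_succ]
    exact (ih (m := m + 1) (by omega)).deriv_of_isOpen hs le_rfl

section Wronskian

variable {f g : ℝ → ℝ} {I : Set ℝ} {n : ℕ}

theorem contDiffOn_Wr (hf : ContDiffOn ℝ n f I) (hg : ContDiffOn ℝ n g I) (hI : IsOpen I)
    {i j m : ℕ} (hi : m + i ≤ n) (hj : m + j ≤ n) : ContDiffOn ℝ m (Wr i j f g) I :=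
  ((hf.iteratedDeriv_of_isOpen hI hi).mul (hg.iteratedDeriv_of_isOpen hI hj)).sub
    ((hf.iteratedDeriv_of_isOpen hI hj).mul (hg.iteratedDeriv_of_isOpen hI hi))

theorem contDiffOn_Phi (hf : ContDiffOn ℝ n f I) (hg : ContDiffOn ℝ n g I) (hI : IsOpen I)
    (hn : 2 ≤ n) (hW : ∀ x ∈ I, Wr 1 0 f g x ≠ 0) : ContDiffOn ℝ (n - 2 : ℕ) (Phi f g) I :=
  (contDiffOn_Wr (i := 2) (j := 0) hf hg hI (by omega) (by omega)).div
    (contDiffOn_Wr (i := 1) (j := 0) hf hg hI (by omega) (by omega)) hW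

theorem contDiffOn_Psi (hf : ContDiffOn ℝ n f I) (hg : ContDiffOn ℝ n g I) (hI : IsOpen I)
    (hn : 2 ≤ n) (hW : ∀ x ∈ I, Wr 1 0 f g x ≠ 0) : ContDiffOn ℝ (n - 2 : ℕ) (Psi f g) I :=
  ((contDiffOn_Wr (i := 2) (j := 1) hf hg hI (by omega) (by omega)).div
    (contDiffOn_Wr (i := 1) (j := 0) hf hg hI (by omega) (by omega)) hW).neg

theorem Wr_swap (i j : ℕ) (f g : ℝ → ℝ) : Wr i j g f = -Wr i j f g := by
  ext x
  simp only [Wr, Pi.neg_apply]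
  ring

theorem Phi_swap (f g : ℝ → ℝ) : Phi g f = Phi f g := by
  ext x
  rw [Phi, Phi, Wr_swap 2 0 f g, Wr_swap 1 0 f g, Pi.neg_apply, Pi.neg_apply, neg_div_neg_eq]

theorem Psi_swap (f g : ℝ → ℝ) : Psi g f = Psi f g := by
  ext x
  rw [Psi, Psi, Wr_swap 2 1 f g, Wr_swap 1 0 f g, Pi.neg_apply, Pi.neg_apply, neg_div_neg_eq]

theorem deriv_deriv_eq_Phi_mul_add_Psi_mul {x : ℝ} (hW : Wr 1 0 f g x ≠ 0) :
    deriv (deriv f) x = Phi f g x * deriv f x + Psi f g x * f x := by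
  simp only [Phi, Psi, Wr, iteratedDeriv_zero, iteratedDeriv_succ] at hW ⊢
  have hW' : g x * deriv f x - f x * deriv g x ≠ 0 := by rwa [mul_comm (g x)]
  field_simp
  ring

theorem deriv_deriv_eq_Phi_mul_add_Psi_mul' {x : ℝ} (hW : Wr 1 0 f g x ≠ 0) :
    deriv (deriv g) x = Phi f g x * deriv g x + Psi f g x * g x := by
  rw [← Phi_swap, ← Psi_swap]
  exact deriv_deriv_eq_Phi_mul_add_Psi_mul (by rwa [Wr_swap, Pi.neg_apply, neg_ne_zero])

end Wronskian

theorem deriv_eq_zero_of_eqOn_const {I : Set ℝ} {u : ℝ → ℝ} {c x : ℝ} (hI : IsOpen I)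
    (hu : EqOn u (fun _ => c) I) (hx : x ∈ I) : deriv u x = 0 := by
  rw [(Filter.eventuallyEq_of_mem (hI.mem_nhds hx) hu).deriv_eq, deriv_const]

theorem iteratedDeriv_succ_eq_of_eventuallyEq {h p q : ℝ → ℝ} {x a b : ℝ} {i : ℕ}
    (hrep : iteratedDeriv i h =ᶠ[nhds x] fun y => p y * deriv h y + q y * h y)
    (hp : DifferentiableAt ℝ p x) (hq : DifferentiableAt ℝ q x)
    (hh : DifferentiableAt ℝ h x) (hh' : DifferentiableAt ℝ (deriv h) x)
    (hode : deriv (deriv h) x = a * deriv h x + b * h x) :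
    iteratedDeriv (i + 1) h x =
      (deriv p x + p x * a + q x) * deriv h x + (p x * b + deriv q x) * h x := by
  rw [iteratedDeriv_succ, hrep.deriv_eq, deriv_fun_add (hp.fun_mul hh') (hq.fun_mul hh),
    deriv_fun_mul hp hh', deriv_fun_mul hq hh, hode]
  ring

structure HigherDerivCoeffs (I : Set ℝ) (n : ℕ) (Φ Ψ : ℝ → ℝ) (φ ψ : ℕ → ℝ → ℝ) : Prop where
  phi_zero : ∀ x ∈ I, φ 0 x = 0
  psi_zero : ∀ x ∈ I, ψ 0 x = 1
  phi_succ : ∀ i < n, ∀ x ∈ I, φ (i + 1) x = deriv (φ i) x + φ i x * Φ x + ψ i x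
  psi_succ : ∀ i < n, ∀ x ∈ I, ψ (i + 1) x = φ i x * Ψ x + deriv (ψ i) x

namespace HigherDerivCoeffs

variable {I : Set ℝ} {n : ℕ} {Φ Ψ : ℝ → ℝ} {φ ψ : ℕ → ℝ → ℝ}

theorem eqOn_one (hc : HigherDerivCoeffs I n Φ Ψ φ ψ) (hI : IsOpen I) (hn : 1 ≤ n) :
    (∀ x ∈ I, φ 1 x = 1) ∧ ∀ x ∈ I, ψ 1 x = 0 := by
  constructor
  · intro x hx
    rw [hc.phi_succ 0 hn x hx, deriv_eq_zero_of_eqOn_const hI hc.phi_zero hx, hc.phi_zero x hx,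
      hc.psi_zero x hx]
    ring
  · intro x hx
    rw [hc.psi_succ 0 hn x hx, deriv_eq_zero_of_eqOn_const hI hc.psi_zero hx, hc.phi_zero x hx]
    ring

theorem contDiffOn (hc : HigherDerivCoeffs I n Φ Ψ φ ψ) (hI : IsOpen I)
    (hΦ : ContDiffOn ℝ (n - 2 : ℕ) Φ I) (hΨ : ContDiffOn ℝ (n - 2 : ℕ) Ψ I) :
    ∀ i ≤ n, ContDiffOn ℝ (n - i : ℕ) (φ i) I ∧ ContDiffOn ℝ (n - i : ℕ) (ψ i) I := by
  intro i
  induction i with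
  | zero => exact fun _ => ⟨contDiffOn_const.congr hc.phi_zero, contDiffOn_const.congr hc.psi_zero⟩
  | succ i ih =>
    intro hi
    rcases Nat.eq_zero_or_pos i with rfl | hi0
    · -- `Φ, Ψ` are only `C^{n-2}`, but `φ₁ = 1`, `ψ₁ = 0` do not involve them
      obtain ⟨hφ1, hψ1⟩ := hc.eqOn_one hI hi
      exact ⟨contDiffOn_const.congr hφ1, contDiffOn_const.congr hψ1⟩
    obtain ⟨hφ, hψ⟩ := ih (by omega)
    have hle : ((n - (i + 1) : ℕ) : WithTop ℕ∞) ≤ (n - i : ℕ) := by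
      exact_mod_cast (by omega : n - (i + 1) ≤ n - i)
    have hle2 : ((n - (i + 1) : ℕ) : WithTop ℕ∞) ≤ (n - 2 : ℕ) := by
      exact_mod_cast (by omega : n - (i + 1) ≤ n - 2)
    have hsucc : ((n - (i + 1) : ℕ) : WithTop ℕ∞) + 1 ≤ (n - i : ℕ) := by
      exact_mod_cast (by omega : n - (i + 1) + 1 ≤ n - i)
    exact ⟨(((hφ.deriv_of_isOpen hI hsucc).add ((hφ.of_le hle).mul (hΦ.of_le hle2))).add
        (hψ.of_le hle)).congr (hc.phi_succ i hi),
      (((hφ.of_le hle).mul (hΨ.of_le hle2)).add (hψ.deriv_of_isOpen hI hsucc)).congr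
        (hc.psi_succ i hi)⟩

theorem iteratedDeriv_eq (hc : HigherDerivCoeffs I n Φ Ψ φ ψ) (hI : IsOpen I) (hn : 2 ≤ n)
    (hΦ : ContDiffOn ℝ (n - 2 : ℕ) Φ I) (hΨ : ContDiffOn ℝ (n - 2 : ℕ) Ψ I) {h : ℝ → ℝ}
    (hh : ContDiffOn ℝ n h I) (hode : ∀ x ∈ I, deriv (deriv h) x = Φ x * deriv h x + Ψ x * h x) :
    ∀ i ≤ n, ∀ x ∈ I, iteratedDeriv i h x = φ i x * deriv h x + ψ i x * h x := by
  have hh1 : DifferentiableOn ℝ h I := hh.differentiableOn (by exact_mod_cast (by omega : n ≠ 0))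
  have hh2 : DifferentiableOn ℝ (deriv h) I :=
    (hh.deriv_of_isOpen hI (m := 1) (by exact_mod_cast hn)).differentiableOn one_ne_zero
  intro i
  induction i with
  | zero => intro _ x hx; simp [hc.phi_zero x hx, hc.psi_zero x hx]
  | succ i ih =>
    intro hi x hx
    have hxI := hI.mem_nhds hx
    have hi' : ((n - i : ℕ) : WithTop ℕ∞) ≠ 0 := by exact_mod_cast (by omega : n - i ≠ 0)
    obtain ⟨hφ, hψ⟩ := hc.contDiffOn hI hΦ hΨ i (by omega)
    rw [hc.phi_succ i hi x hx, hc.psi_succ i hi x hx]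
    exact iteratedDeriv_succ_eq_of_eventuallyEq
      (Filter.eventuallyEq_of_mem hxI (ih (by omega)))
      ((hφ.differentiableOn hi').differentiableAt hxI)
      ((hψ.differentiableOn hi').differentiableAt hxI)
      (hh1.differentiableAt hxI) (hh2.differentiableAt hxI) (hode x hx)

end HigherDerivCoeffs

theorem statement16_general (I : Set ℝ) (hIopen : IsOpen I)
    (n : ℕ) (hn : 2 ≤ n) (f g : ℝ → ℝ) (hfg : ClassC n I f g)
    (φ ψ : ℕ → ℝ → ℝ)
    (hφ0 : ∀ x ∈ I, φ 0 x = 0) (hψ0 : ∀ x ∈ I, ψ 0 x = 1)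
    (hrec : ∀ i < n, ∀ x ∈ I,
      φ (i + 1) x = deriv (φ i) x + φ i x * Phi f g x + ψ i x ∧
      ψ (i + 1) x = φ i x * Psi f g x + deriv (ψ i) x) :
    ∀ i ≤ n, ∀ x ∈ I,
      iteratedDeriv i f x = φ i x * deriv f x + ψ i x * f x ∧
      iteratedDeriv i g x = φ i x * deriv g x + ψ i x * g x := by
  obtain ⟨hf, hg, -, hW⟩ := hfg
  have hc : HigherDerivCoeffs I n (Phi f g) (Psi f g) φ ψ :=
    ⟨hφ0, hψ0, fun i hi x hx => (hrec i hi x hx).1, fun i hi x hx => (hrec i hi x hx).2⟩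
  have hΦ := contDiffOn_Phi hf hg hIopen hn hW
  have hΨ := contDiffOn_Psi hf hg hIopen hn hW
  intro i hi x hx
  exact ⟨hc.iteratedDeriv_eq hIopen hn hΦ hΨ hf
      (fun y hy => deriv_deriv_eq_Phi_mul_add_Psi_mul (hW y hy)) i hi x hx,
    hc.iteratedDeriv_eq hIopen hn hΦ hΨ hg
      (fun y hy => deriv_deriv_eq_Phi_mul_add_Psi_mul' (hW y hy)) i hi x hx⟩

/-- Representation of higher derivatives via the recursive sequences `(φᵢ)`, `(ψᵢ)`. -/
theorem statement16 (I : Set ℝ) (hIopen : IsOpen I) (hIne : I.Nonempty)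
    (hIconn : I.OrdConnected)
    (n : ℕ) (hn : 2 ≤ n) (f g : ℝ → ℝ) (hfg : ClassC n I f g)
    (φ ψ : ℕ → ℝ → ℝ)
    (hφ0 : ∀ x ∈ I, φ 0 x = 0) (hψ0 : ∀ x ∈ I, ψ 0 x = 1)
    (hrec : ∀ i < n, ∀ x ∈ I,
      φ (i + 1) x = deriv (φ i) x + φ i x * Phi f g x + ψ i x ∧
      ψ (i + 1) x = φ i x * Psi f g x + deriv (ψ i) x) :
    ∀ i ≤ n, ∀ x ∈ I,
      iteratedDeriv i f x = φ i x * deriv f x + ψ i x * f x ∧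
      iteratedDeriv i g x = φ i x * deriv g x + ψ i x * g x :=
  statement16_general I hIopen n hn f g hfg φ ψ hφ0 hψ0 hrec
end
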